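/- arXiv:0911.0768 — 6 statements merged into one kernel-verified Lean document; each statement's English description precedes it below -/
import Mathlib

section
/- Suppose a ≥ 0 and that there exists v ∈ V with v ≠ 0 and |v| < a + 1. Then the quantized system with parameter a and input set U is not ULDI in k steps for any k ∈ ℕ (hence not ULDI). Indeed, the points x₁ = −v/(a+1) and x₂ = v/(a+1) lie in ]−1,1[ and form a period-2 orbit of the difference system under the alternating input sequence v, −v, v, −v, … -/
noncomputable section

/-- State trajectory of the quantized system: x(0) = x₀, x(k) = a·x(k−1) + u(k). -/
def traj (a x₀ : ℝ) (u : ℕ → ℝ) : ℕ → ℝ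
  | 0 => x₀
  | k + 1 => a * traj a x₀ u k + u (k + 1)

/-- The input sequences u, u′ are uniformly distinguishable in k steps with waiting time l. -/
def UDist (a : ℝ) (k l : ℕ) (u u' : ℕ → ℝ) : Prop :=
  ∀ x₀ x₀' : ℝ, ∀ m : ℕ, m > l → u m ≠ u' m →
    ∃ j : ℕ, m ≤ j ∧ j ≤ m + k ∧ ⌊traj a x₀ u j⌋ ≠ ⌊traj a x₀' u' j⌋

/-- The system is uniformly left invertible in k steps. -/
def ULIin (a : ℝ) (U : Set ℝ) (k : ℕ) : Prop :=
  ∃ l : ℕ, ∀ u u' : ℕ → ℝ, (∀ i, u i ∈ U) → (∀ i, u' i ∈ U) → UDist a k l u u'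

/-- The system is uniformly left invertible. -/
def ULI (a : ℝ) (U : Set ℝ) : Prop := ∃ k, ULIin a U k

/-- The input sequences u, u′ are uniformly D-distinguishable in k steps with waiting time l. -/
def UDDist (a : ℝ) (k l : ℕ) (u u' : ℕ → ℝ) : Prop :=
  ∀ z₀ : ℝ, ∀ m : ℕ, m > l → u m - u' m ≠ 0 →
    ∃ j : ℕ, m ≤ j ∧ j ≤ m + k ∧ 1 ≤ |traj a z₀ (fun i => u i - u' i) j|

/-- The system is uniformly left D-invertible in k steps. -/
def ULDIin (a : ℝ) (U : Set ℝ) (k : ℕ) : Prop :=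
  ∃ l : ℕ, ∀ u u' : ℕ → ℝ, (∀ i, u i ∈ U) → (∀ i, u' i ∈ U) → UDDist a k l u u'

/-- The system is uniformly left D-invertible. -/
def ULDI (a : ℝ) (U : Set ℝ) : Prop := ∃ k, ULDIin a U k

/-- The set V = U − U of input differences. -/
def Vset (U : Set ℝ) : Set ℝ := {v | ∃ u ∈ U, ∃ u' ∈ U, v = u - u'}

lemma orbit (a v : ℝ) (ha : 0 ≤ a) (k : ℕ) :
    traj a (-v / (a + 1)) (fun m => if Odd m then v else -v) k =
      if Even k then -v / (a + 1) else v / (a + 1) := by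
  have h1 : a + 1 ≠ 0 := by positivity
  induction k with
  | zero => simp [traj]
  | succ n ih =>
    rw [traj, ih]
    rcases Nat.even_or_odd n with he | ho
    · have h2 : ¬ Even (n + 1) := by simp [Nat.even_add_one, he]
      have h3 : Odd (n + 1) := Even.add_one he
      simp only [if_pos he, if_neg h2, if_pos h3]
      field_simp
      ring
    · have h2 : Even (n + 1) := Odd.add_one ho
      have h3 : ¬ Odd (n + 1) := Nat.not_odd_iff_even.mpr h2
      have h4 : ¬ Even n := Nat.not_even_iff_odd.mpr ho
      simp only [if_neg h4, if_pos h2, if_neg h3]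
      field_simp
      ring

/-- If a ≥ 0 and some v ∈ V, v ≠ 0 has |v| < a + 1, then the system is not
ULDI in k steps for any k; moreover x₁ = −v/(a+1), x₂ = v/(a+1) lie in ]−1,1[ and form a
period-2 orbit of the difference system under the alternating inputs v, −v, v, −v, …. -/
theorem stmt1 (a : ℝ) (U : Set ℝ) (hfin : U.Finite) (hnt : U.Nontrivial)
    (ha : 0 ≤ a) (v : ℝ) (hv : v ∈ Vset U) (hv0 : v ≠ 0) (hvsmall : |v| < a + 1) :
    (∀ k : ℕ, ¬ ULDIin a U k) ∧
    (-v / (a + 1) ∈ Set.Ioo (-1 : ℝ) 1 ∧ v / (a + 1) ∈ Set.Ioo (-1 : ℝ) 1) ∧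
    (∀ k : ℕ, traj a (-v / (a + 1)) (fun m => if Odd m then v else -v) k =
      if Even k then -v / (a + 1) else v / (a + 1)) := by
  have hpos : (0 : ℝ) < a + 1 := by linarith
  have habs : |v / (a + 1)| < 1 := by
    rw [abs_div, abs_of_pos hpos, div_lt_one hpos]; exact hvsmall
  have habs' : |(-v) / (a + 1)| < 1 := by
    rw [abs_div, abs_neg, abs_of_pos hpos, div_lt_one hpos]; exact hvsmall
  obtain ⟨u1, hu1, u2, hu2, hvdef⟩ := hv
  refine ⟨?_, ⟨abs_lt.mp habs', abs_lt.mp habs⟩, orbit a v ha⟩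
  intro k ⟨l, hl⟩
  set u : ℕ → ℝ := fun m => if Odd m then u1 else u2 with hu
  set u' : ℕ → ℝ := fun m => if Odd m then u2 else u1 with hu'
  have hmem : ∀ i, u i ∈ U := by intro i; by_cases h : Odd i <;> simp [hu, h, hu1, hu2]
  have hmem' : ∀ i, u' i ∈ U := by intro i; by_cases h : Odd i <;> simp [hu', h, hu1, hu2]
  have hdiff : (fun i => u i - u' i) = fun m => if Odd m then v else -v := by
    funext i; by_cases h : Odd i
    · simp [hu, hu', h, hvdef]
    · simp only [hu, hu', if_neg h, hvdef]; ring
  have hne : u (l + 1) - u' (l + 1) ≠ 0 := by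
    rw [congrFun hdiff (l + 1)]
    by_cases h : Odd (l + 1) <;> simp [h, hv0]
  obtain ⟨j, _, _, hj⟩ := hl u u' hmem hmem' (-v / (a + 1)) (l + 1) (Nat.lt_succ_self l) hne
  rw [hdiff, orbit a v ha j] at hj
  by_cases h : Even j
  · rw [if_pos h, neg_div, abs_neg] at hj; linarith
  · rw [if_neg h] at hj; linarith [habs]
end
end

section
/- If the quantized system with parameter a and input set U is ULDI in k steps (with waiting time l), then it is ULI in k steps (with the same waiting time l). In particular, uniform left D-invertibility implies uniform left invertibility. -/
noncomputable section

/-! By linearity, the difference of two trajectories of the quantized system is a trajectory of the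
difference system, started at the difference of the initial states. Equal quantized outputs
`⌊x⌋ = ⌊x'⌋` force `|x - x'| < 1`, so an output-indistinguishable pair would give a difference
trajectory staying in `(-1, 1)`, which uniform D-distinguishability rules out. -/

theorem traj_sub (a x₀ x₀' : ℝ) (u u' : ℕ → ℝ) (j : ℕ) :
    traj a (x₀ - x₀') (fun i => u i - u' i) j = traj a x₀ u j - traj a x₀' u' j := by
  induction j with
  | zero => rfl
  | succ n ih => simp only [traj, ih]; ring

theorem UDDist.udist {a : ℝ} {k l : ℕ} {u u' : ℕ → ℝ} (hd : UDDist a k l u u') :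
    UDist a k l u u' := by
  intro x₀ x₀' m hm hne
  obtain ⟨j, hmj, hjk, hdiff⟩ := hd (x₀ - x₀') m hm (sub_ne_zero.mpr hne)
  refine ⟨j, hmj, hjk, fun hfloor => ?_⟩
  rw [traj_sub] at hdiff
  exact (Int.abs_sub_lt_one_of_floor_eq_floor hfloor).not_ge hdiff

theorem ULDIin.uliIn {a : ℝ} {U : Set ℝ} {k : ℕ} (h : ULDIin a U k) : ULIin a U k :=
  let ⟨l, hl⟩ := h
  ⟨l, fun u u' hu hu' => (hl u u' hu hu').udist⟩

theorem ULDI.uli {a : ℝ} {U : Set ℝ} (h : ULDI a U) : ULI a U :=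
  let ⟨k, hk⟩ := h
  ⟨k, hk.uliIn⟩

theorem stmt2_general (a : ℝ) (U : Set ℝ) (k l : ℕ)
    (h : ∀ u u' : ℕ → ℝ, (∀ i, u i ∈ U) → (∀ i, u' i ∈ U) → UDDist a k l u u') :
    (∀ u u' : ℕ → ℝ, (∀ i, u i ∈ U) → (∀ i, u' i ∈ U) → UDist a k l u u') ∧
    (ULDI a U → ULI a U) :=
  ⟨fun u u' hu hu' => (h u u' hu hu').udist, ULDI.uli⟩

/-- ULDI in k steps (with waiting time l) implies ULI in k steps (with the
same waiting time l); in particular ULDI implies ULI. -/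
theorem stmt2 (a : ℝ) (U : Set ℝ) (hfin : U.Finite) (hnt : U.Nontrivial) (k l : ℕ)
    (h : ∀ u u' : ℕ → ℝ, (∀ i, u i ∈ U) → (∀ i, u' i ∈ U) → UDDist a k l u u') :
    (∀ u u' : ℕ → ℝ, (∀ i, u i ∈ U) → (∀ i, u' i ∈ U) → UDist a k l u u') ∧
    (ULDI a U → ULI a U) :=
  stmt2_general a U k l h
end
end

section
/- (Kronecker) Let α₁, …, α_M ∈ ℝ be such that α₁, …, α_M, 1 are linearly independent over ℤ (equivalently, over ℚ). Then for every θ₁, …, θ_M ∈ ℝ, the set of points { (frac(l·α₁ + θ₁), …, frac(l·α_M + θ_M)) : l ∈ ℝ } is dense in the unit cube [0,1]^M of ℝ^M. -/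
/-!
Let `H` be the closure of the subgroup `ℝα + ℤ^M` of `ℝ^M`. A closed subgroup of a
finite-dimensional real space that is not the whole space carries a nonzero linear functional with
integer values on it. For `H` such a functional is integer-valued on `ℤ^M`, so it is `x ↦ k ⬝ x`
with `k ∈ ℤ^M`, and integer-valued on the line `ℝα`, so `k ⬝ α = 0` and `k = 0`. Hence
`ℝα + ℤ^M` is dense; reducing modulo `ℤ^M` makes the fractional parts dense in the open cube,
hence in its closure `[0,1]^M`.
-/

open Filter Topology

namespace AddSubgroup

section Normed

variable {E : Type*} [NormedAddCommGroup E] [NormedSpace ℝ E]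

/-- Normalising small nonzero elements of `H` and extracting a convergent subsequence on the unit
sphere gives a direction `u`; every `t • u` is a limit of integer multiples of those elements. -/
theorem exists_forall_smul_mem_of_zero_mem_closure [ProperSpace E] {H : AddSubgroup E}
    (hH : IsClosed (H : Set E)) (h0 : (0 : E) ∈ _root_.closure ((H : Set E) \ {0})) :
    ∃ u ≠ (0 : E), ∀ t : ℝ, t • u ∈ H := by
  obtain ⟨h, hmem, hlim⟩ := mem_closure_iff_seq_limit.1 h0
  have hne : ∀ n, h n ≠ 0 := fun n => (hmem n).2
  have hnorm : Tendsto (fun n => ‖h n‖) atTop (𝓝 0) := by simpa using hlim.norm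
  have hsphere : ∀ n, ‖h n‖⁻¹ • h n ∈ Metric.sphere (0 : E) 1 := fun n => by
    simp [norm_smul, hne n]
  obtain ⟨u, hu, φ, hφ, hconv⟩ := (isCompact_sphere (0 : E) 1).tendsto_subseq hsphere
  refine ⟨u, ne_zero_of_mem_unit_sphere ⟨u, hu⟩, fun t => ?_⟩
  set r : ℕ → ℝ := fun n => ‖h (φ n)‖
  have hr : Tendsto r atTop (𝓝 0) := hnorm.comp hφ.tendsto_atTop
  have hr0 : ∀ n, r n ≠ 0 := fun n => norm_ne_zero_iff.2 (hne _)
  have hfloor : Tendsto (fun n => (⌊t / r n⌋ : ℝ) * r n) atTop (𝓝 t) := by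
    refine tendsto_iff_norm_sub_tendsto_zero.2
      (squeeze_zero (fun _ => norm_nonneg _) (fun n => ?_) hr)
    rw [Real.norm_eq_abs, abs_le]
    constructor <;> nlinarith [Int.floor_le (t / r n), Int.lt_floor_add_one (t / r n),
      div_mul_cancel₀ t (hr0 n), norm_nonneg (h (φ n))]
  refine hH.mem_of_tendsto (hfloor.smul hconv) (Eventually.of_forall fun n => ?_)
  rw [Function.comp_apply, smul_smul, mul_assoc, mul_inv_cancel₀ (hr0 n), mul_one,
    Int.cast_smul_eq_zsmul]
  exact zsmul_mem (hmem _).1 _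

theorem discreteTopology_of_forall_smul_mem [ProperSpace E] {H : AddSubgroup E}
    (hH : IsClosed (H : Set E)) (hline : ∀ u : E, (∀ t : ℝ, t • u ∈ H) → u = 0) :
    DiscreteTopology H := by
  by_cases h0 : (0 : E) ∈ _root_.closure ((H : Set E) \ {0})
  · obtain ⟨u, hu, huH⟩ := exists_forall_smul_mem_of_zero_mem_closure hH h0
    exact absurd (hline u huH) hu
  · rw [mem_closure_iff] at h0
    push Not at h0
    obtain ⟨U, hU, h0U, hUH⟩ := h0
    rw [discreteTopology_iff_isOpen_singleton_zero]
    refine ⟨U, hU, Set.ext fun x => ⟨fun hx => ?_, fun hx => ?_⟩⟩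
    · by_contra hx0
      exact (Set.eq_empty_iff_forall_notMem.1 hUH) x ⟨hx, x.2, fun h => hx0 (Subtype.ext h)⟩
    · rw [Set.mem_singleton_iff.1 hx]
      exact h0U

variable [FiniteDimensional ℝ E]

/-- A discrete subgroup spanning `E` is a `ℤ`-lattice, and a coordinate functional of a basis of
it is integral on it. -/
theorem exists_dual_ne_zero_mapsTo_intCast_of_discreteTopology [Nontrivial E]
    (L : AddSubgroup E) [DiscreteTopology L] :
    ∃ f : Module.Dual ℝ E, f ≠ 0 ∧ Set.MapsTo f L (Set.range ((↑) : ℤ → ℝ)) := by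
  by_cases hspan : Submodule.span ℝ (L : Set E) = ⊤
  · have : DiscreteTopology L.toIntSubmodule := ‹DiscreteTopology L›
    have : IsZLattice ℝ L.toIntSubmodule := ⟨hspan⟩
    let b₀ := Module.Free.chooseBasis ℤ L.toIntSubmodule
    let b := b₀.ofZLatticeBasis ℝ L.toIntSubmodule
    obtain ⟨i⟩ := b.index_nonempty
    refine ⟨b.coord i, fun h => by simpa using LinearMap.congr_fun h (b i), fun x hx => ?_⟩
    exact ⟨b₀.repr ⟨x, hx⟩ i, (b₀.ofZLatticeBasis_repr_apply ℝ L.toIntSubmodule ⟨x, hx⟩ i).symm⟩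
  · obtain ⟨f, hf, hker⟩ := Submodule.exists_le_ker_of_lt_top _ (lt_top_iff_ne_top.2 hspan)
    exact ⟨f, hf, fun x hx => ⟨0, by simpa using (hker (Submodule.subset_span hx)).symm⟩⟩

def largestSubmodule (H : AddSubgroup E) : Submodule ℝ E where
  carrier := {u | ∀ t : ℝ, t • u ∈ H}
  add_mem' hu hv t := by simpa only [smul_add] using H.add_mem (hu t) (hv t)
  zero_mem' t := by simp
  smul_mem' s u hu t := by simpa only [smul_smul] using hu (t * s)

/-- Project `H` along its largest subspace `W` onto a complement `C`: the image `H ∩ C` is closed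
and contains no line, hence is discrete, and a functional integral on it pulls back to `E`. -/
theorem exists_dual_ne_zero_mapsTo_intCast_of_isClosed {H : AddSubgroup E}
    (hH : IsClosed (H : Set E)) (htop : H ≠ ⊤) :
    ∃ f : Module.Dual ℝ E, f ≠ 0 ∧ Set.MapsTo f H (Set.range ((↑) : ℤ → ℝ)) := by
  set W := largestSubmodule H
  have hWH : ∀ w ∈ W, w ∈ H := fun w hw => by simpa using hw 1
  obtain ⟨C, hWC⟩ := W.exists_isCompl
  have hC : Nontrivial C := by
    rw [Submodule.nontrivial_iff_ne_bot]
    rintro rfl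
    exact htop (eq_top_iff.2 fun x _ => hWH x (by simp [eq_top_of_isCompl_bot hWC]))
  set L := H.comap C.subtype.toAddMonoidHom
  have hL : DiscreteTopology L := by
    refine discreteTopology_of_forall_smul_mem (hH.preimage continuous_subtype_val) fun u hu => ?_
    have huW : (u : E) ∈ W := hu
    simpa using (Submodule.disjoint_def.1 hWC.disjoint) u huW u.2
  obtain ⟨g, hg, hgL⟩ := exists_dual_ne_zero_mapsTo_intCast_of_discreteTopology L
  let P := C.projectionOnto W hWC.symm
  refine ⟨g ∘ₗ P, fun h => hg ?_, fun x hx => hgL ?_⟩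
  · ext c
    simpa [P] using LinearMap.congr_fun h c
  · have : x - C.projection W hWC.symm x ∈ H := hWH _ (Submodule.sub_projection_mem _ x)
    simpa [L, P] using H.sub_mem hx this

end Normed

end AddSubgroup

theorem eq_zero_of_forall_mul_mem_range_intCast {c : ℝ}
    (h : ∀ t : ℝ, t * c ∈ Set.range ((↑) : ℤ → ℝ)) : c = 0 := by
  by_contra hc
  obtain ⟨k, hk⟩ := h (c⁻¹ / 2)
  rw [div_mul_eq_mul_div, inv_mul_cancel₀ hc] at hk
  have : (2 * k : ℤ) = 1 := by exact_mod_cast (by linarith : (2 * k : ℝ) = 1)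
  omega

section Kronecker

variable {ι : Type*}

def lineAddIntLattice (α : ι → ℝ) : AddSubgroup (ι → ℝ) :=
  ((LinearMap.toSpanSingleton ℝ _ α).toAddMonoidHom.coprod
    ((Int.castAddHom ℝ).compLeft ι)).range

theorem mem_lineAddIntLattice {α x : ι → ℝ} :
    x ∈ lineAddIntLattice α ↔ ∃ (t : ℝ) (m : ι → ℤ), t • α + (fun i => (m i : ℝ)) = x := by
  simp only [lineAddIntLattice, AddMonoidHom.mem_range, Prod.exists, AddMonoidHom.coprod_apply]
  rfl

variable [Fintype ι]

theorem dense_lineAddIntLattice {α : ι → ℝ} (hα : LinearIndependent ℤ α) :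
    Dense (lineAddIntLattice α : Set (ι → ℝ)) := by
  classical
  set G := lineAddIntLattice α
  rw [dense_iff_closure_eq, ← G.topologicalClosure_coe, ← AddSubgroup.coe_top,
    SetLike.coe_set_eq]
  by_contra htop
  obtain ⟨f, hf0, hfG⟩ :=
    AddSubgroup.exists_dual_ne_zero_mapsTo_intCast_of_isClosed G.isClosed_topologicalClosure htop
  replace hfG : ∀ x ∈ G, f x ∈ Set.range ((↑) : ℤ → ℝ) :=
    fun x hx => hfG (G.le_topologicalClosure hx)
  choose k hk using fun i => hfG (Pi.single i 1)
    (mem_lineAddIntLattice.2 ⟨0, Pi.single i 1, by ext j; simp [Pi.single_apply]⟩)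
  have hfα : f α = 0 := eq_zero_of_forall_mul_mem_range_intCast fun t => by
    simpa using hfG (t • α) (mem_lineAddIntLattice.2 ⟨t, 0, by ext; simp⟩)
  have hfα' : f α = ∑ i, k i • α i := by
    conv_lhs => rw [← Finset.univ_sum_single α]
    simp_rw [map_sum]
    refine Finset.sum_congr rfl fun i _ => ?_
    rw [show Pi.single i (α i) = α i • (Pi.single i 1 : ι → ℝ) by ext j; simp [Pi.single_apply],
      map_smul, ← hk, smul_eq_mul, zsmul_eq_mul, mul_comm]
  have hk0 := Fintype.linearIndependent_iff.1 hα k (hfα' ▸ hfα)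
  exact hf0 ((Pi.basisFun ℝ ι).ext fun i => by simp [← hk, hk0])

theorem Icc_subset_closure_fract_of_dense {α : ι → ℝ} (θ : ι → ℝ)
    (hdense : Dense (lineAddIntLattice α : Set (ι → ℝ))) :
    Set.Icc (0 : ι → ℝ) 1 ⊆
      closure {x : ι → ℝ | ∃ l : ℝ, x = fun i => Int.fract (l * α i + θ i)} := by
  set U := Set.univ.pi fun _ : ι => Set.Ioo (0 : ℝ) 1
  have hU : IsOpen U := isOpen_set_pi Set.finite_univ fun _ _ => isOpen_Ioo
  have hIcc : Set.Icc (0 : ι → ℝ) 1 = closure U := by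
    rw [closure_pi_set, ← Set.pi_univ_Icc]
    simp [closure_Ioo]
  have hsub : U ∩ (· - θ) ⁻¹' lineAddIntLattice α ⊆
      {x | ∃ l : ℝ, x = fun i => Int.fract (l * α i + θ i)} := by
    rintro x ⟨hxU, hx⟩
    obtain ⟨t, m, hx⟩ := mem_lineAddIntLattice.1 hx
    refine ⟨t, funext fun i => ?_⟩
    have hxi : x i = t * α i + θ i + m i := by
      have := congr_fun hx i
      simp only [Pi.add_apply, Pi.smul_apply, smul_eq_mul, Pi.sub_apply] at this
      linarith
    obtain ⟨hx0, hx1⟩ := hxU i trivial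
    rw [← Int.fract_add_intCast _ (m i), ← hxi, Int.fract_eq_self.2 ⟨hx0.le, hx1⟩]
  rw [hIcc]
  refine closure_minimal (fun x hx => ?_) isClosed_closure
  exact closure_mono hsub
    ((hdense.preimage (isOpenMap_sub_right θ)).open_subset_closure_inter hU hx)

end Kronecker

/-- Kronecker: if α₁, …, α_M, 1 are linearly independent over ℤ, then for
every θ₁, …, θ_M the set {(frac(l·α₁+θ₁), …, frac(l·α_M+θ_M)) : l ∈ ℝ} is dense in the
unit cube [0,1]^M. -/
theorem stmt3 (M : ℕ) (α : Fin M → ℝ)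
    (hindep : ∀ (k : Fin M → ℤ) (k₀ : ℤ),
      (∑ i, (k i : ℝ) * α i) + (k₀ : ℝ) = 0 → (∀ i, k i = 0) ∧ k₀ = 0)
    (θ : Fin M → ℝ) :
    Set.Icc (0 : Fin M → ℝ) 1 ⊆
      closure {x : Fin M → ℝ | ∃ l : ℝ, x = fun i => Int.fract (l * α i + θ i)} := by
  have hα : LinearIndependent ℤ α := Fintype.linearIndependent_iff.2 fun k hk =>
    (hindep k 0 (by simpa [zsmul_eq_mul] using hk)).1
  exact Icc_subset_closure_fract_of_dense θ (dense_lineAddIntLattice hα)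
end

section
/- Let K, J ∈ ℕ and let α₀, …, α_K ∈ ℤ with gcd(α₀, …, α_K) = 1. Then the linear map Ψ : ℤ^{K+J+1} → ℤ^{J+1} defined by (Ψt)_i = Σ_{j=0}^K α_j·t_{i+j} for i = 0, …, J is surjective. -/
open Finset Matrix

namespace Stmt6

/-- zero-extension of a `Fin (n+1)`-indexed family to `ℕ`. -/
def ext0 (n : ℕ) (α : Fin (n + 1) → ℤ) : ℕ → ℤ :=
  fun m => if h : m < n + 1 then α ⟨m, h⟩ else 0

/-- the square Toeplitz window at columns `r, …, r+J`. -/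
def T (K J : ℕ) (α : Fin (K + 1) → ℤ) (r : ℕ) :
    Matrix (Fin (J + 1)) (Fin (J + 1)) ℤ :=
  Matrix.of fun i i₂ => if i.1 ≤ r + i₂.1 then ext0 K α (r + i₂.1 - i.1) else 0

/-- embed a vector of length `J+1` at offset `r` into length `K+J+1`. -/
def emb (K J : ℕ) (r : ℕ) (w : Fin (J + 1) → ℤ) : Fin (K + J + 1) → ℤ :=
  fun m => if r ≤ m.1 then ext0 J w (m.1 - r) else 0

lemma sum_shift (g : ℕ → ℤ) (a L N : ℕ) (hN : a + L ≤ N)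
    (h0 : ∀ n, n < a → g n = 0) (h1 : ∀ n, a + L ≤ n → g n = 0) :
    ∑ n ∈ Finset.range N, g n = ∑ j ∈ Finset.range L, g (a + j) := by
  have h2 : ∑ n ∈ Finset.Ico a (a + L), g n = ∑ j ∈ Finset.range L, g (a + j) := by
    rw [Finset.sum_Ico_eq_sum_range]
    simp
  rw [← h2]
  symm
  apply Finset.sum_subset
  · intro x hx
    rw [Finset.mem_Ico] at hx
    rw [Finset.mem_range]
    omega
  · intro x hx hx'
    rw [Finset.mem_Ico] at hx'
    rcases not_and_or.mp hx' with h | h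
    · exact h0 x (by omega)
    · exact h1 x (by omega)

lemma key (K J : ℕ) (α : Fin (K + 1) → ℤ) (r : ℕ) (hr : r ≤ K)
    (w : Fin (J + 1) → ℤ) (i : Fin (J + 1)) :
    ∑ j : Fin (K + 1), α j * emb K J r w ⟨i.1 + j.1, by omega⟩
      = (T K J α r *ᵥ w) i := by
  set g : ℕ → ℤ := fun n =>
    (if i.1 ≤ n then ext0 K α (n - i.1) else 0) *
      (if r ≤ n then ext0 J w (n - r) else 0) with hg
  have h0i : ∀ n, n < i.1 → g n = 0 := by
    intro n hn
    have h2 : (if i.1 ≤ n then ext0 K α (n - i.1) else 0) = 0 := if_neg (by omega)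
    simp only [hg]; rw [h2, zero_mul]
  have h1i : ∀ n, i.1 + (K + 1) ≤ n → g n = 0 := by
    intro n hn
    have h3 : ext0 K α (n - i.1) = 0 := by
      unfold ext0; rw [dif_neg (by omega)]
    have h2 : (if i.1 ≤ n then ext0 K α (n - i.1) else 0) = 0 := by
      rw [if_pos (show i.1 ≤ n by omega), h3]
    simp only [hg]; rw [h2, zero_mul]
  have h0r : ∀ n, n < r → g n = 0 := by
    intro n hn
    have h2 : (if r ≤ n then ext0 J w (n - r) else 0) = 0 := if_neg (by omega)
    simp only [hg]; rw [h2, mul_zero]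
  have h1r : ∀ n, r + (J + 1) ≤ n → g n = 0 := by
    intro n hn
    have h3 : ext0 J w (n - r) = 0 := by
      unfold ext0; rw [dif_neg (by omega)]
    have h2 : (if r ≤ n then ext0 J w (n - r) else 0) = 0 := by
      rw [if_pos (show r ≤ n by omega), h3]
    simp only [hg]; rw [h2, mul_zero]
  have hL : ∑ j : Fin (K + 1), α j * emb K J r w ⟨i.1 + j.1, by omega⟩
      = ∑ n ∈ Finset.range (K + J + 1), g n := by
    rw [sum_shift g i.1 (K + 1) (K + J + 1) (by omega) h0i h1i]
    rw [← Fin.sum_univ_eq_sum_range (fun j => g (i.1 + j)) (K + 1)]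
    apply Finset.sum_congr rfl
    intro j _
    simp only [hg, emb]
    rw [if_pos (Nat.le_add_right _ _), Nat.add_sub_cancel_left]
    have : ext0 K α j.1 = α j := by unfold ext0; rw [dif_pos j.2]
    rw [this]
  have hR : (T K J α r *ᵥ w) i = ∑ n ∈ Finset.range (K + J + 1), g n := by
    rw [sum_shift g r (J + 1) (K + J + 1) (by omega) h0r h1r]
    rw [Matrix.mulVec, dotProduct]
    rw [← Fin.sum_univ_eq_sum_range (fun i₂ => g (r + i₂)) (J + 1)]
    apply Finset.sum_congr rfl
    intro i₂ _
    simp only [hg, T, Matrix.of_apply]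
    rw [if_pos (Nat.le_add_right r i₂.1), Nat.add_sub_cancel_left]
    have : ext0 J w i₂.1 = w i₂ := by unfold ext0; rw [dif_pos i₂.2]
    rw [this]
  rw [hL, hR]

lemma det_T_tri {R : Type*} [CommRing R] (K J : ℕ) (α : Fin (K + 1) → ℤ)
    (φ : ℤ →+* R) (r : ℕ) (hr : r < K + 1)
    (hmax : ∀ n, r < n → φ (ext0 K α n) = 0) :
    ((T K J α r).map φ).det = φ (α ⟨r, hr⟩) ^ (J + 1) := by
  rw [Matrix.det_of_lowerTriangular]
  · have hdiag : ∀ i : Fin (J + 1), ((T K J α r).map φ) i i = φ (α ⟨r, hr⟩) := by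
      intro i
      simp only [Matrix.map_apply, T, Matrix.of_apply]
      rw [if_pos (by omega), Nat.add_sub_cancel]
      congr 1
      unfold ext0; rw [dif_pos hr]
    calc ∏ i : Fin (J + 1), ((T K J α r).map φ) i i
        = ∏ _i : Fin (J + 1), φ (α ⟨r, hr⟩) := by
          exact Finset.prod_congr rfl (fun i _ => hdiag i)
      _ = φ (α ⟨r, hr⟩) ^ (J + 1) := by
          rw [Finset.prod_const, Finset.card_univ, Fintype.card_fin]
  · intro i j hij
    simp only [OrderDual.toDual_lt_toDual] at hij
    simp only [Matrix.map_apply, T, Matrix.of_apply]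
    have hij' : (i : ℕ) < (j : ℕ) := hij
    rw [if_pos (by omega)]
    exact hmax _ (by omega)

lemma bezout {ι : Type*} [DecidableEq ι] (s : Finset ι) (f : ι → ℤ) :
    ∃ c : ι → ℤ, ∑ i ∈ s, c i * f i = s.gcd f := by
  classical
  induction s using Finset.induction_on with
  | empty => exact ⟨0, by simp⟩
  | @insert a s ha ih =>
    obtain ⟨c, hc⟩ := ih
    set g := s.gcd f with hgdef
    refine ⟨fun i => if i = a then Int.gcdA (f a) g else Int.gcdB (f a) g * c i, ?_⟩
    rw [Finset.sum_insert ha, Finset.gcd_insert]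
    simp only [if_pos rfl]
    have hsum : ∑ i ∈ s, (if i = a then Int.gcdA (f a) g else Int.gcdB (f a) g * c i) * f i
        = Int.gcdB (f a) g * ∑ i ∈ s, c i * f i := by
      rw [Finset.mul_sum]
      apply Finset.sum_congr rfl
      intro i hi
      rw [if_neg (by rintro rfl; exact ha hi)]
      ring
    rw [hsum, hc, ← hgdef]
    rw [← Int.coe_gcd, Int.gcd_eq_gcd_ab]
    simp only [if_true]
    ring

lemma gcd_ne (K J : ℕ) (α : Fin (K + 1) → ℤ)
    (hgcd : Finset.univ.gcd α = 1) :
    (Finset.univ.gcd fun r : Fin (K + 1) => (T K J α r.1).det) = 1 ∨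
    (Finset.univ.gcd fun r : Fin (K + 1) => (T K J α r.1).det) = -1 := by
  set g := Finset.univ.gcd (fun r : Fin (K + 1) => (T K J α r.1).det) with hgdef
  -- the gcd is nonzero
  have hg0 : g ≠ 0 := by
    intro h
    have hall := Finset.gcd_eq_zero_iff.mp h
    have hSne : (Finset.univ.filter (fun j : Fin (K + 1) => α j ≠ 0)).Nonempty := by
      by_contra hS
      rw [Finset.not_nonempty_iff_eq_empty, Finset.filter_eq_empty_iff] at hS
      have : Finset.univ.gcd α = 0 := Finset.gcd_eq_zero_iff.mpr
        (fun x hx => by simpa using hS hx)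
      rw [hgcd] at this; exact one_ne_zero this
    set r₀ := (Finset.univ.filter (fun j : Fin (K + 1) => α j ≠ 0)).max' hSne with hr₀
    have hr₀mem := (Finset.univ.filter (fun j : Fin (K + 1) => α j ≠ 0)).max'_mem hSne
    rw [Finset.mem_filter] at hr₀mem
    have hmax : ∀ n, r₀.1 < n → (RingHom.id ℤ) (ext0 K α n) = 0 := by
      intro n hn
      simp only [RingHom.id_apply]
      unfold ext0
      split
      · rename_i hnK
        by_contra hne
        have hmem : (⟨n, hnK⟩ : Fin (K + 1)) ∈
            Finset.univ.filter (fun j : Fin (K + 1) => α j ≠ 0) := by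
          rw [Finset.mem_filter]; exact ⟨Finset.mem_univ _, hne⟩
        have := Finset.le_max' _ _ hmem
        rw [← hr₀] at this
        exact absurd this (by simp [Fin.le_def]; omega)
      · rfl
    have hdet := det_T_tri K J α (RingHom.id ℤ) r₀.1 r₀.2 hmax
    have hmapid : (T K J α r₀.1).map (RingHom.id ℤ) = T K J α r₀.1 := by
      ext i j; simp [Matrix.map_apply]
    rw [hmapid] at hdet
    have := hall r₀ (Finset.mem_univ _)
    rw [this] at hdet
    have hα : α ⟨r₀.1, r₀.2⟩ ≠ 0 := by
      have : (⟨r₀.1, r₀.2⟩ : Fin (K + 1)) = r₀ := by ext; rfl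
      rw [this]; exact hr₀mem.2
    exact pow_ne_zero (J + 1) hα hdet.symm
  -- no prime divides the gcd
  have hprime : ∀ p : ℕ, p.Prime → ¬ (p : ℤ) ∣ g := by
    intro p hp hdvd
    haveI := Fact.mk hp
    have hdall : ∀ r : Fin (K + 1), (p : ℤ) ∣ (T K J α r.1).det := by
      intro r
      exact hdvd.trans (Finset.gcd_dvd (Finset.mem_univ r))
    have hSne : (Finset.univ.filter (fun j : Fin (K + 1) => ¬ (p : ℤ) ∣ α j)).Nonempty := by
      by_contra hS
      rw [Finset.not_nonempty_iff_eq_empty, Finset.filter_eq_empty_iff] at hS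
      have hdg : (p : ℤ) ∣ Finset.univ.gcd α :=
        Finset.dvd_gcd (fun j hj => by simpa using hS hj)
      rw [hgcd] at hdg
      have := Int.le_of_dvd one_pos hdg
      have := hp.two_le
      omega
    set r₁ := (Finset.univ.filter (fun j : Fin (K + 1) => ¬ (p : ℤ) ∣ α j)).max' hSne with hr₁
    have hr₁mem := (Finset.univ.filter (fun j : Fin (K + 1) => ¬ (p : ℤ) ∣ α j)).max'_mem hSne
    rw [Finset.mem_filter] at hr₁mem
    have hmax : ∀ n, r₁.1 < n → (Int.castRingHom (ZMod p)) (ext0 K α n) = 0 := by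
      intro n hn
      unfold ext0
      split
      · rename_i hnK
        have hdvdn : (p : ℤ) ∣ α ⟨n, hnK⟩ := by
          by_contra hne
          have hmem : (⟨n, hnK⟩ : Fin (K + 1)) ∈
              Finset.univ.filter (fun j : Fin (K + 1) => ¬ (p : ℤ) ∣ α j) := by
            rw [Finset.mem_filter]; exact ⟨Finset.mem_univ _, hne⟩
          have := Finset.le_max' _ _ hmem
          rw [← hr₁] at this
          exact absurd this (by simp [Fin.le_def]; omega)
        simpa [Int.castRingHom, ZMod.intCast_zmod_eq_zero_iff_dvd] using
          (ZMod.intCast_zmod_eq_zero_iff_dvd _ p).mpr hdvdn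
      · simp
    have hdet := det_T_tri K J α (Int.castRingHom (ZMod p)) r₁.1 r₁.2 hmax
    have hcast : ((T K J α r₁.1).map (Int.castRingHom (ZMod p))).det
        = ((Int.castRingHom (ZMod p)) (T K J α r₁.1).det) := by
      rw [← RingHom.mapMatrix_apply]
      exact (RingHom.map_det _ _).symm
    rw [hcast] at hdet
    have hzero : (Int.castRingHom (ZMod p)) (T K J α r₁.1).det = 0 := by
      simpa [ZMod.intCast_zmod_eq_zero_iff_dvd] using
        (ZMod.intCast_zmod_eq_zero_iff_dvd _ p).mpr (hdall r₁)
    rw [hzero] at hdet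
    have hαz : (Int.castRingHom (ZMod p)) (α ⟨r₁.1, r₁.2⟩) = 0 :=
      (pow_eq_zero_iff (Nat.succ_ne_zero J)).mp hdet.symm
    have : (p : ℤ) ∣ α ⟨r₁.1, r₁.2⟩ :=
      (ZMod.intCast_zmod_eq_zero_iff_dvd _ p).mp (by simpa using hαz)
    have heq : (⟨r₁.1, r₁.2⟩ : Fin (K + 1)) = r₁ := by ext; rfl
    rw [heq] at this
    exact hr₁mem.2 this
  -- conclude |g| = 1
  have habs : g.natAbs = 1 := by
    by_contra h
    have h0 : g.natAbs ≠ 0 := fun hh => hg0 (Int.natAbs_eq_zero.mp hh)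
    obtain ⟨p, hp, hpd⟩ := Nat.exists_prime_and_dvd h
    exact hprime p hp ((Int.natCast_dvd_natCast.mpr hpd).trans (Int.natAbs_dvd.mpr dvd_rfl))
  rcases Int.natAbs_eq g with h | h
  · left; rw [h, habs]; rfl
  · right; rw [h, habs]; rfl

lemma gcd_det (K J : ℕ) (α : Fin (K + 1) → ℤ)
    (hgcd : Finset.univ.gcd α = 1) :
    ∃ c : Fin (K + 1) → ℤ, ∑ r : Fin (K + 1), c r * (T K J α r.1).det = 1 := by
  obtain ⟨c, hc⟩ := bezout Finset.univ (fun r : Fin (K + 1) => (T K J α r.1).det)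
  rcases gcd_ne K J α hgcd with h | h
  · exact ⟨c, by rw [hc, h]⟩
  · refine ⟨fun r => -c r, ?_⟩
    have : ∑ r : Fin (K + 1), (fun r => -c r) r * (T K J α r.1).det
        = -∑ r : Fin (K + 1), c r * (T K J α r.1).det := by
      rw [← Finset.sum_neg_distrib]
      exact Finset.sum_congr rfl (fun r _ => by ring)
    rw [this, hc, h]; ring

end Stmt6

/-- if gcd(α₀,…,α_K) = 1, the Toeplitz band map
Ψ : ℤ^{K+J+1} → ℤ^{J+1}, (Ψt)_i = Σ_{j=0}^K α_j·t_{i+j}, is surjective. -/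
theorem stmt6 (K J : ℕ) (α : Fin (K + 1) → ℤ)
    (hgcd : Finset.univ.gcd α = 1) :
    Function.Surjective (fun t : Fin (K + J + 1) → ℤ =>
      fun i : Fin (J + 1) =>
        ∑ j : Fin (K + 1), α j * t ⟨i.1 + j.1, by omega⟩) := by
  intro b
  obtain ⟨c, hc⟩ := Stmt6.gcd_det K J α hgcd
  refine ⟨fun m => ∑ r : Fin (K + 1),
    c r * Stmt6.emb K J r.1 ((Stmt6.T K J α r.1).adjugate *ᵥ b) m, ?_⟩
  funext i
  simp only []
  have step1 : ∀ j : Fin (K + 1),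
      α j * (∑ r : Fin (K + 1),
        c r * Stmt6.emb K J r.1 ((Stmt6.T K J α r.1).adjugate *ᵥ b) ⟨i.1 + j.1, by omega⟩)
      = ∑ r : Fin (K + 1),
        c r * (α j * Stmt6.emb K J r.1 ((Stmt6.T K J α r.1).adjugate *ᵥ b) ⟨i.1 + j.1, by omega⟩) := by
    intro j
    rw [Finset.mul_sum]
    exact Finset.sum_congr rfl (fun r _ => by ring)
  rw [Finset.sum_congr rfl (fun j _ => step1 j), Finset.sum_comm]
  have step2 : ∀ r : Fin (K + 1),
      ∑ j : Fin (K + 1),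
        c r * (α j * Stmt6.emb K J r.1 ((Stmt6.T K J α r.1).adjugate *ᵥ b) ⟨i.1 + j.1, by omega⟩)
      = c r * ((Stmt6.T K J α r.1).det * b i) := by
    intro r
    rw [← Finset.mul_sum,
      Stmt6.key K J α r.1 (by omega) ((Stmt6.T K J α r.1).adjugate *ᵥ b) i]
    congr 1
    have h3 : Stmt6.T K J α r.1 *ᵥ ((Stmt6.T K J α r.1).adjugate *ᵥ b)
        = (Stmt6.T K J α r.1).det • b := by
      rw [Matrix.mulVec_mulVec, Matrix.mul_adjugate, Matrix.smul_mulVec,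
        Matrix.one_mulVec]
    rw [h3, Pi.smul_apply, smul_eq_mul]
  rw [Finset.sum_congr rfl (fun r _ => step2 r)]
  have step3 : ∑ r : Fin (K + 1), c r * ((Stmt6.T K J α r.1).det * b i)
      = (∑ r : Fin (K + 1), c r * (Stmt6.T K J α r.1).det) * b i := by
    rw [Finset.sum_mul]
    exact Finset.sum_congr rfl (fun r _ => by ring)
  rw [step3, hc, one_mul]
end

section
/- Let a ∈ ℝ be algebraic over ℚ with minimal integer polynomial of degree K and associated maps Ψ_K^J. Then ε(a) = inf{ ε ∈ ℝ : for every J ∈ ℕ and every w ∈ ℝ^{J+1}, the set Ψ_K^J·[0,ε]^{K+J+1} + w contains a point of ℤ^{J+1} }, where Ψ_K^J·[0,ε]^{K+J+1} denotes the image of the cube [0,ε]^{K+J+1} under Ψ_K^J. -/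
noncomputable section

/-- The Toeplitz band map Ψ_K^J : ℝ^{K+J+1} → ℝ^{J+1},
(Ψ_K^J t)_i = Σ_{j=0}^K α_j·t_{i+j}. -/
def Psi (K J : ℕ) (α : Fin (K + 1) → ℤ) (t : Fin (K + J + 1) → ℝ) : Fin (J + 1) → ℝ :=
  fun i => ∑ j : Fin (K + 1), (α j : ℝ) * t ⟨i.1 + j.1, by omega⟩

/-- ε(a) = inf{ε : for every J and every v ∈ ℝ^{K+J+1}, the cube [0,ε]^{K+J+1} meets
P_K^J + v + ℤ^{K+J+1}}, where P_K^J = ker Ψ_K^J and α is the coefficient vector of the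
minimal integer polynomial of a. -/
noncomputable def epsA (K : ℕ) (α : Fin (K + 1) → ℤ) : ℝ :=
  sInf {ε : ℝ | ∀ J : ℕ, ∀ v : Fin (K + J + 1) → ℝ,
    ∃ x ∈ Set.Icc (0 : Fin (K + J + 1) → ℝ) (fun _ => ε),
      ∃ p : Fin (K + J + 1) → ℝ, Psi K J α p = 0 ∧
        ∃ z : Fin (K + J + 1) → ℤ, x = p + v + fun i => (z i : ℝ)}

/-! Since `Ψ` is onto over `ℝ`, every shift `w` has the form `-Ψ v`, and the cube meets
`P + v + ℤ^{K+J+1}` at `x` exactly when `Ψ x - Ψ v ∈ Ψ(ℤ^{K+J+1})`. So the two sets of `ε`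
coincide as soon as `Ψ` maps `ℤ^{K+J+1}` onto `ℤ^{J+1}`.

If `α_m` is the last nonzero coefficient, the columns `m, …, m + J` of `Ψ` form a lower
triangular block with determinant `α_m^{J+1}`; its adjugate shows that the image of any band
map contains `α_m^{J+1}` times everything. Over a field this makes the band map onto. Over `ℤ`
the image `S` therefore contains `n ℤ^{J+1}` for some `n ≠ 0`, and, the coefficients being
coprime, `α` is nonzero mod every prime `p`, so `S + p ℤ^{J+1}` is everything. Peeling off the
prime factors of `n` one at a time then gives `S = ℤ^{J+1}`. -/

open Finset Matrix

section Band

variable {R : Type*} [CommRing R] {K : ℕ} (β : Fin (K + 1) → R) (J : ℕ)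

def bandMap : (Fin (K + J + 1) → R) →ₗ[R] (Fin (J + 1) → R) where
  toFun t i := ∑ j : Fin (K + 1), β j * t ⟨i + j, by omega⟩
  map_add' t u := by ext i; simp [mul_add, sum_add_distrib]
  map_smul' c t := by ext i; simp [mul_sum, mul_left_comm]

lemma bandMap_apply (t : Fin (K + J + 1) → R) (i : Fin (J + 1)) :
    bandMap β J t i = ∑ j : Fin (K + 1), β j * t ⟨i + j, by omega⟩ := rfl

lemma map_bandMap {S : Type*} [CommRing S] (f : R →+* S) (t : Fin (K + J + 1) → R)
    (i : Fin (J + 1)) : f (bandMap β J t i) = bandMap (f ∘ β) J (f ∘ t) i := by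
  simp [bandMap_apply]

def bandBlock (m : Fin (K + 1)) : Matrix (Fin (J + 1)) (Fin (J + 1)) R :=
  of fun i l => bandMap β J (Pi.single ⟨m + l, by omega⟩ 1) i

lemma bandBlock_apply (m : Fin (K + 1)) (i l : Fin (J + 1)) :
    bandBlock β J m i l = ∑ j : Fin (K + 1), if (i : ℕ) + j = m + l then β j else 0 := by
  simp only [bandBlock, of_apply, bandMap_apply, Pi.single_apply, Fin.mk.injEq, mul_ite,
    mul_one, mul_zero]

lemma bandMap_sum_single (m : Fin (K + 1)) (y : Fin (J + 1) → R) :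
    bandMap β J (∑ l, y l • Pi.single ⟨m + l, by omega⟩ 1) = bandBlock β J m *ᵥ y := by
  ext i
  simp [map_sum, mulVec, dotProduct, bandBlock, mul_comm]

variable {β} {m : Fin (K + 1)}

lemma bandBlock_isLowerTriangular (hm : ∀ j, m < j → β j = 0) :
    (bandBlock β J m).IsLowerTriangular := by
  intro i l hil
  rw [bandBlock_apply]
  refine sum_eq_zero fun j _ => ?_
  rw [OrderDual.toDual_lt_toDual, Fin.lt_def] at hil
  split_ifs with h
  · exact hm j (Fin.lt_def.mpr (by omega))
  · rfl

lemma bandBlock_diag (i : Fin (J + 1)) : bandBlock β J m i i = β m := by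
  rw [bandBlock_apply, sum_eq_single m]
  · simp [add_comm]
  · intro j _ hj
    rw [if_neg]
    intro h
    exact hj (Fin.ext (by omega))
  · simp

lemma det_bandBlock (hm : ∀ j, m < j → β j = 0) : (bandBlock β J m).det = β m ^ (J + 1) := by
  rw [det_of_isLowerTriangular _ (bandBlock_isLowerTriangular J hm)]
  simp [bandBlock_diag]

lemma exists_bandMap_eq_pow_smul (hm : ∀ j, m < j → β j = 0) (c : Fin (J + 1) → R) :
    ∃ t, bandMap β J t = β m ^ (J + 1) • c := by
  refine ⟨∑ l, (adjugate (bandBlock β J m) *ᵥ c) l • Pi.single ⟨m + l, by omega⟩ 1, ?_⟩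
  rw [bandMap_sum_single, mulVec_mulVec, mul_adjugate, det_bandBlock J hm, smul_mulVec,
    one_mulVec]

lemma exists_last_ne_zero (hβ : β ≠ 0) : ∃ m, β m ≠ 0 ∧ ∀ j, m < j → β j = 0 := by
  classical
  have hne : (univ.filter (β · ≠ 0)).Nonempty := by
    obtain ⟨j, hj⟩ := Function.ne_iff.mp hβ
    exact ⟨j, by simpa using hj⟩
  refine ⟨_, (mem_filter.mp (max'_mem _ hne)).2, fun j hj => ?_⟩
  by_contra h
  exact (le_max' _ j (by simpa using h)).not_gt hj

theorem bandMap_surjective {F : Type*} [Field F] {β : Fin (K + 1) → F} (hβ : β ≠ 0) :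
    Function.Surjective (bandMap β J) := by
  obtain ⟨m, hm0, hm⟩ := exists_last_ne_zero hβ
  intro c
  obtain ⟨t, ht⟩ := exists_bandMap_eq_pow_smul J hm ((β m ^ (J + 1))⁻¹ • c)
  exact ⟨t, by rw [ht, smul_smul, mul_inv_cancel₀ (pow_ne_zero _ hm0), one_smul]⟩

end Band

theorem AddSubgroup.eq_top_of_nsmul_mem_of_forall_prime {G : Type*} [AddCommGroup G]
    (S : AddSubgroup G) {n : ℕ} (hn : n ≠ 0) (hnS : ∀ g, n • g ∈ S)
    (hS : ∀ p : ℕ, p.Prime → ∀ g, ∃ s ∈ S, ∃ d, g = s + p • d) : S = ⊤ := by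
  have hmod : ∀ k : ℕ, k ≠ 0 → ∀ g, ∃ s ∈ S, ∃ d, g = s + k • d := by
    refine induction_on_primes (by simp) (fun _ g => ⟨0, S.zero_mem, g, by simp⟩) ?_
    intro p k hp ih hpk g
    obtain ⟨s, hs, d, rfl⟩ := ih (right_ne_zero_of_mul hpk) g
    obtain ⟨s', hs', d', rfl⟩ := hS p hp d
    refine ⟨s + k • s', S.add_mem hs (S.nsmul_mem hs' k), d', ?_⟩
    rw [smul_add, mul_comm, mul_smul, add_assoc]
  refine eq_top_iff.mpr fun g _ => ?_
  obtain ⟨s, hs, d, rfl⟩ := hmod n hn g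
  exact S.add_mem hs (hnS d)

lemma ne_zero_of_univ_gcd_eq_one {ι : Type*} [Fintype ι] {α : ι → ℤ} (hα : univ.gcd α = 1) :
    α ≠ 0 := by
  rintro rfl
  simp [gcd_eq_zero_iff.mpr] at hα

section IntBand

variable {K : ℕ} {α : Fin (K + 1) → ℤ} (J : ℕ)

lemma exists_eq_bandMap_add_prime_smul (hα : univ.gcd α = 1) {p : ℕ} (hp : p.Prime)
    (g : Fin (J + 1) → ℤ) : ∃ t d, g = bandMap α J t + p • d := by
  have := Fact.mk hp
  have hβ : (Int.cast ∘ α : Fin (K + 1) → ZMod p) ≠ 0 := by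
    intro h
    have hdvd : (p : ℤ) ∣ univ.gcd α :=
      dvd_gcd fun j _ => (ZMod.intCast_zmod_eq_zero_iff_dvd _ p).mp (congrFun h j)
    rw [hα] at hdvd
    exact hp.ne_one (Nat.dvd_one.mp (by exact_mod_cast hdvd))
  obtain ⟨t', ht'⟩ := bandMap_surjective J hβ (Int.cast ∘ g)
  obtain ⟨t, rfl⟩ := ZMod.intCast_surjective.comp_left t'
  have hdvd (i : Fin (J + 1)) : (p : ℤ) ∣ g i - bandMap α J t i := by
    have hcast := map_bandMap α J (Int.castRingHom (ZMod p)) t i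
    simp only [Int.coe_castRingHom] at hcast
    rw [← ZMod.intCast_zmod_eq_zero_iff_dvd, Int.cast_sub, hcast, ht', Function.comp_apply,
      sub_self]
  choose d hd using hdvd
  exact ⟨t, d, funext fun i => by simp [← hd]⟩

theorem bandMap_int_surjective (hα : univ.gcd α = 1) : Function.Surjective (bandMap α J) := by
  obtain ⟨m, hm0, hm⟩ := exists_last_ne_zero (ne_zero_of_univ_gcd_eq_one hα)
  set S := (LinearMap.range (bandMap α J)).toAddSubgroup
  suffices S = ⊤ from fun c => by simpa [S] using (this ▸ AddSubgroup.mem_top c : c ∈ S)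
  refine S.eq_top_of_nsmul_mem_of_forall_prime (n := (α m ^ (J + 1)).natAbs)
    (by simp [hm0]) (fun g => ?_) (fun p hp g => ?_)
  · obtain ⟨t, ht⟩ := exists_bandMap_eq_pow_smul J hm g
    rw [← natCast_zsmul, Int.natCast_natAbs]
    rcases abs_choice (α m ^ (J + 1)) with h | h <;> rw [h]
    · exact ⟨t, ht⟩
    · exact ⟨-t, by rw [map_neg, ht, neg_smul]⟩
  · obtain ⟨t, d, rfl⟩ := exists_eq_bandMap_add_prime_smul J hα hp g
    exact ⟨_, ⟨t, rfl⟩, d, rfl⟩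

end IntBand

theorem forall_exists_mem_ker_add_intCast_iff {ι κ : Type*} (f : (ι → ℝ) →ₗ[ℝ] (κ → ℝ))
    (hf : Function.Surjective f) (fℤ : (ι → ℤ) → (κ → ℤ)) (hfℤ : Function.Surjective fℤ)
    (hcast : ∀ z, f (fun s => (z s : ℝ)) = fun i => (fℤ z i : ℝ)) (C : Set (ι → ℝ)) :
    (∀ v, ∃ x ∈ C, ∃ p, f p = 0 ∧ ∃ z : ι → ℤ, x = p + v + fun s => (z s : ℝ)) ↔
      ∀ w, ∃ x ∈ C, ∃ z : κ → ℤ, f x + w = fun i => (z i : ℝ) := by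
  constructor
  · intro h w
    obtain ⟨v, hv⟩ := hf (-w)
    obtain ⟨x, hx, p, hp, z, rfl⟩ := h v
    refine ⟨_, hx, fℤ z, ?_⟩
    rw [map_add, map_add, hp, hv, hcast]
    abel
  · intro h v
    obtain ⟨x, hx, z, hz⟩ := h (-f v)
    obtain ⟨y, rfl⟩ := hfℤ z
    refine ⟨x, hx, x - v - fun s => (y s : ℝ), ?_, y, by abel⟩
    rw [map_sub, map_sub, hcast, ← hz]
    abel

theorem stmt11_general (K : ℕ) (α : Fin (K + 1) → ℤ)
    (hprim : Finset.univ.gcd α = 1) :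
    epsA K α = sInf {ε : ℝ | ∀ J : ℕ, ∀ w : Fin (J + 1) → ℝ,
      ∃ x ∈ Set.Icc (0 : Fin (K + J + 1) → ℝ) (fun _ => ε),
        ∃ z : Fin (J + 1) → ℤ, Psi K J α x + w = fun i => (z i : ℝ)} := by
  have hα : (Int.cast ∘ α : Fin (K + 1) → ℝ) ≠ 0 := fun h =>
    ne_zero_of_univ_gcd_eq_one hprim (funext fun j => Int.cast_eq_zero.mp (congrFun h j))
  rw [epsA]
  congr 1
  ext ε
  exact forall_congr' fun J => forall_exists_mem_ker_add_intCast_iff (bandMap (Int.cast ∘ α) J)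
    (bandMap_surjective J hα) (bandMap α J) (bandMap_int_surjective J hprim)
    (fun z => funext fun i => (map_bandMap α J (Int.castRingHom ℝ) z i).symm) _

/-- ε(a) equals the infimum of the ε such that for every J and every
w ∈ ℝ^{J+1}, the set Ψ_K^J·[0,ε]^{K+J+1} + w contains an integer point. -/
theorem stmt11 (a : ℝ) (K : ℕ) (α : Fin (K + 1) → ℤ)
    (halg : IsAlgebraic ℚ a) (hdeg : (minpoly ℚ a).natDegree = K)
    (hroot : ∑ i : Fin (K + 1), (α i : ℝ) * a ^ (i : ℕ) = 0)
    (hlead : 0 < α (Fin.last K))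
    (hprim : Finset.univ.gcd α = 1) :
    epsA K α = sInf {ε : ℝ | ∀ J : ℕ, ∀ w : Fin (J + 1) → ℝ,
      ∃ x ∈ Set.Icc (0 : Fin (K + J + 1) → ℝ) (fun _ => ε),
        ∃ z : Fin (J + 1) → ℤ, Psi K J α x + w = fun i => (z i : ℝ)} :=
  stmt11_general K α hprim
end
end

section
/- Let a = p/q where p and q are nonzero coprime integers with q ≥ 1 and p/q ∉ ℤ exactly when q > 1; a has minimal integer polynomial q·x − p of degree 1. Then ε(a) ≤ min{1/|p|, 1/|q|}. -/
/-!
For `K = 1` the kernel of `Ψ` consists of the geometric sequences `t i = s * p ^ i * q ^ (J + 1 - i)`,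
so it suffices to find `s` making every `t i + v i` at most `ε` modulo `1`. This is done one
coordinate at a time: replacing `s` by `(s + k) / q` with `k ∈ ℤ` shifts the earlier coordinates by
integers, while the new last coordinate moves by `k * p ^ (n + 1) / q`, which by coprimality runs
through all of `(1 / q) ℤ` modulo `1`. Exchanging the roles of `p` and `q` gives the bound `1 / |p|`.
-/

noncomputable section

open Int

lemma epsA_le_of_forall_exists_fract_le {K : ℕ} {α : Fin (K + 1) → ℤ} {ε : ℝ}
    (h : ∀ (J : ℕ) (v : Fin (K + J + 1) → ℝ),
      ∃ t, Psi K J α t = 0 ∧ ∀ i, fract (t i + v i) ≤ ε) :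
    epsA K α ≤ ε := by
  refine csInf_le ⟨0, fun e he => ?_⟩ fun J v => ?_
  · obtain ⟨x, ⟨hx0, hxe⟩, -⟩ := he 0 0
    exact (hx0 0).trans (hxe 0)
  · obtain ⟨t, ht, hfract⟩ := h J v
    refine ⟨fun i => fract (t i + v i), ⟨fun i => fract_nonneg _, hfract⟩, t, ht,
      fun i => -⌊t i + v i⌋, ?_⟩
    ext i
    simp [← self_sub_floor, sub_eq_add_neg]

lemma Psi_one_geometric_eq_zero (a b : ℤ) (J : ℕ) (s : ℝ) :
    Psi 1 J ![-a, b] (fun i => s * (a : ℝ) ^ (i : ℕ) * (b : ℝ) ^ (J + 1 - i)) = 0 := by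
  ext i
  have hexp : J + 1 - i = J + 1 - (i + 1) + 1 := by omega
  simp only [Psi, Fin.sum_univ_succ, Fin.sum_univ_zero, Matrix.cons_val_zero, Matrix.cons_val_succ,
    Fin.val_zero, Fin.val_succ, add_zero, zero_add, Pi.zero_apply, hexp]
  push_cast
  ring

lemma exists_fract_add_mul_div_lt_of_pos {c b : ℤ} (hcop : IsCoprime c b) (hb : 0 < b) (w : ℝ) :
    ∃ k : ℤ, fract (w + k * c / b) < 1 / b := by
  obtain ⟨x, y, hxy⟩ := hcop
  have hbR : (0 : ℝ) < b := by exact_mod_cast hb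
  set u := ⌊w * b⌋
  refine ⟨-u * x, ?_⟩
  have hshift : w + ((-u * x : ℤ) : ℝ) * c / b = fract (w * b) / b + (u * y : ℤ) := by
    have hxyR : (x : ℝ) * c = 1 - y * b := by exact_mod_cast eq_sub_of_add_eq hxy
    rw [← self_sub_floor]
    push_cast
    field_simp
    linear_combination -(u : ℝ) * hxyR
  have hsmall : fract (w * b) / b < 1 / b := div_lt_div_of_pos_right (fract_lt_one _) hbR
  rw [hshift, fract_add_intCast, fract_eq_self.mpr
    ⟨div_nonneg (fract_nonneg _) hbR.le, hsmall.trans_le (by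
      rw [div_le_one hbR]; exact_mod_cast hb)⟩]
  exact hsmall

lemma exists_fract_add_mul_div_lt {c b : ℤ} (hcop : IsCoprime c b) (hb : b ≠ 0) (w : ℝ) :
    ∃ k : ℤ, fract (w + k * c / b) < 1 / |(b : ℝ)| := by
  rcases hb.lt_or_gt with hneg | hpos
  · obtain ⟨k, hk⟩ := exists_fract_add_mul_div_lt_of_pos hcop.neg_neg (neg_pos.mpr hneg) w
    refine ⟨k, ?_⟩
    rw [abs_of_neg (by exact_mod_cast hneg)]
    push_cast at hk
    rwa [mul_neg, neg_div_neg_eq] at hk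
  · rw [abs_of_pos (by exact_mod_cast hpos)]
    exact exists_fract_add_mul_div_lt_of_pos hcop hpos w

lemma exists_fract_geometric_lt {a b : ℤ} (hcop : IsCoprime a b) (hb : b ≠ 0) (n : ℕ)
    (v : ℕ → ℝ) :
    ∃ s : ℝ, ∀ i ≤ n, fract (s * (a : ℝ) ^ i * (b : ℝ) ^ (n - i) + v i) < 1 / |(b : ℝ)| := by
  induction n with
  | zero => exact ⟨-v 0, fun i hi => by simp [Nat.le_zero.mp hi, hb]⟩
  | succ n ih =>
    obtain ⟨s, hs⟩ := ih
    obtain ⟨k, hk⟩ := exists_fract_add_mul_div_lt (hcop.pow_left (m := n + 1)) hb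
      (s * (a : ℝ) ^ (n + 1) / b + v (n + 1))
    refine ⟨(s + k) / b, fun i hi => ?_⟩
    rcases hi.lt_or_eq with hlt | rfl
    · have hexp : n + 1 - i = (n - i) + 1 := by omega
      have hshift : (s + k) / b * (a : ℝ) ^ i * (b : ℝ) ^ (n + 1 - i) + v i
          = s * (a : ℝ) ^ i * (b : ℝ) ^ (n - i) + v i + (k * a ^ i * b ^ (n - i) : ℤ) := by
        rw [hexp, pow_succ]
        push_cast
        field_simp
        ring
      rw [hshift, fract_add_intCast]
      exact hs i (by omega)
    · convert hk using 2
      push_cast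
      simp only [Nat.sub_self, pow_zero, mul_one]
      ring

lemma exists_fract_geometric_lt_min {a b : ℤ} (hcop : IsCoprime a b) (ha : a ≠ 0) (hb : b ≠ 0)
    (n : ℕ) (v : ℕ → ℝ) :
    ∃ s : ℝ, ∀ i ≤ n, fract (s * (a : ℝ) ^ i * (b : ℝ) ^ (n - i) + v i)
      < min (1 / |(a : ℝ)|) (1 / |(b : ℝ)|) := by
  rcases le_total (1 / |(a : ℝ)|) (1 / |(b : ℝ)|) with hle | hle
  · obtain ⟨s, hs⟩ := exists_fract_geometric_lt hcop.symm ha n (fun j => v (n - j))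
    refine ⟨s, fun i hi => ?_⟩
    have := hs (n - i) (Nat.sub_le n i)
    rw [Nat.sub_sub_self hi] at this
    rw [min_eq_left hle, mul_right_comm]
    exact this
  · obtain ⟨s, hs⟩ := exists_fract_geometric_lt hcop hb n v
    exact ⟨s, fun i hi => (min_eq_right hle).symm ▸ hs i hi⟩

/-- for a = p/q with p, q nonzero coprime integers, q ≥ 1 (so that the
minimal integer polynomial of a is q·x − p, with coefficient vector α₀ = −p, α₁ = q),
one has ε(a) ≤ min{1/|p|, 1/|q|}. -/
theorem stmt12 (p q : ℤ) (hp : p ≠ 0) (hq : 1 ≤ q) (hcop : IsCoprime p q) :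
    epsA 1 ![-p, q] ≤ min (1 / |(p : ℝ)|) (1 / |(q : ℝ)|) := by
  refine epsA_le_of_forall_exists_fract_le fun J v => ?_
  obtain ⟨s, hs⟩ := exists_fract_geometric_lt_min hcop hp (by omega) (J + 1)
    (fun m => if h : m < 1 + J + 1 then v ⟨m, h⟩ else 0)
  refine ⟨_, Psi_one_geometric_eq_zero p q J s, fun i => ?_⟩
  simpa [i.2] using (hs i (by omega)).le
end
end
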